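/- arXiv:2302.13702 — 2 statements merged into one kernel-verified Lean document; each statement's English description precedes it below -/
import Mathlib

section
/- Let p be an odd prime, M, A unitaries with M^p = A^p = I and MA = ω^φ AM with φ ≠ 0 in F_p, and let V = (ω^a/√p) Σ_{k=0}^{p−1} ω^{−k(σ−a)} M^k A^{−k−1}. If |ψ⟩ satisfies A|ψ⟩ = ω^a|ψ⟩, then V|ψ⟩ = √p · P_{(M,σ)}|ψ⟩, where P_{(M,σ)} = (1/p) Σ_{k=0}^{p−1} ω^{−kσ} M^k is the projector onto the ω^σ-eigenspace of M. In particular V|ψ⟩ is a unit eigenvector of M with eigenvalue ω^σ. -/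
open Matrix

/-- The `p`-th root of unity `ω = e^{2πi/p}`. -/
noncomputable def omega (p : ℕ) : ℂ := Complex.exp (2 * Real.pi * Complex.I / p)

/-- The operator `V = (ω^a/√p) Σ_{k=0}^{p−1} ω^{−k(σ−a)} M^k A^{−k−1}`,
where `A⁻¹ = A† = star A` for a unitary `A`. -/
noncomputable def Vop (p d : ℕ) (M A : Matrix (Fin d) (Fin d) ℂ) (σ a : ZMod p) :
    Matrix (Fin d) (Fin d) ℂ :=
  (omega p ^ a.val / (Real.sqrt p : ℂ)) •
    ∑ k ∈ Finset.range p,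
      omega p ^ ((-(k : ZMod p) * (σ - a)).val) • (M ^ k * (star A) ^ (k + 1))

/-- The spectral projector `P_{(M,σ)} = (1/p) Σ_{k=0}^{p−1} ω^{−kσ} M^k`. -/
noncomputable def Pproj (p d : ℕ) (M : Matrix (Fin d) (Fin d) ℂ) (σ : ZMod p) :
    Matrix (Fin d) (Fin d) ℂ :=
  (1 / (p : ℂ)) • ∑ k ∈ Finset.range p, omega p ^ ((-(k : ZMod p) * σ).val) • M ^ k

/-! Write `𝕖 = ZMod.stdAddChar`, so that `ω ^ x.val = 𝕖 x`, and `e j = M ^ j.val ψ` for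
`j : ZMod p`. Since `A† ψ = 𝕖 (-a) ψ`, the phases in `V ψ` collapse, and both `V ψ` and `P ψ` are
multiples of the discrete Fourier transform `X = 𝓕 e σ = ∑ j, 𝕖 (-jσ) e j`; `M` shifts `e`,
hence scales `X` by `𝕖 σ`. The commutation relation makes `e j` an eigenvector of the unitary `A`
with eigenvalue `𝕖 (a - jφ)`. As `φ ≠ 0` these eigenvalues are distinct, so the `e j` are
orthonormal and `‖X‖² = p`. -/

open Finset ZMod

lemma sum_range_eq_sum_zmod_val {β : Type*} [AddCommMonoid β] (p : ℕ) [NeZero p] (g : ℕ → β) :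
    ∑ k ∈ range p, g k = ∑ j : ZMod p, g j.val :=
  Finset.sum_nbij' (fun k ↦ (k : ZMod p)) ZMod.val (by simp) (by simp [ZMod.val_lt])
    (fun k hk ↦ ZMod.val_natCast_of_lt (mem_range.mp hk)) (fun j _ ↦ ZMod.natCast_zmod_val j)
    (fun k hk ↦ by rw [ZMod.val_natCast_of_lt (mem_range.mp hk)])

lemma pow_val_natCast {G : Type*} [Monoid G] {p : ℕ} {g : G} (hg : g ^ p = 1) (m : ℕ) :
    g ^ (m : ZMod p).val = g ^ m := by
  rw [ZMod.val_natCast, ← pow_eq_pow_mod _ hg]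

lemma omega_pow_val {p : ℕ} [NeZero p] (x : ZMod p) : omega p ^ x.val = stdAddChar x := by
  rw [stdAddChar_apply, toCircle_apply, omega, ← Complex.exp_nat_mul]
  ring_nf

lemma dft_comp_add_right {p : ℕ} [NeZero p] {E : Type*} [AddCommGroup E] [Module ℂ E]
    (Φ : ZMod p → E) (s k : ZMod p) :
    𝓕 (fun j ↦ Φ (j + s)) k = stdAddChar (s * k) • 𝓕 Φ k := by
  simp only [dft_apply, smul_sum, smul_smul, ← AddChar.map_add_eq_mul]
  exact Fintype.sum_equiv (Equiv.addRight s) _ _ fun j ↦ by simp only [Equiv.coe_addRight]; ring_nf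

lemma pow_mul_eq_smul_mul_pow {K R : Type*} [CommSemiring K] [Semiring R] [Algebra K R]
    {x y : R} {c : K} (h : x * y = c • (y * x)) (m : ℕ) : x ^ m * y = c ^ m • (y * x ^ m) := by
  induction m with
  | zero => simp
  | succ m ih =>
    rw [pow_succ, mul_assoc, h, mul_smul_comm, ← mul_assoc, ih, smul_mul_assoc, smul_smul,
      mul_assoc, ← pow_succ, ← pow_succ']

section UnitaryMatrix

variable {n R : Type*} [Fintype n]

lemma star_sum_smul_dotProduct_sum_smul [CommSemiring R] [StarRing R] {ι : Type*} [Fintype ι]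
    [DecidableEq ι] {e : ι → n → R} (he : ∀ k l, star (e k) ⬝ᵥ e l = if k = l then 1 else 0)
    (c : ι → R) : star (∑ k, c k • e k) ⬝ᵥ ∑ k, c k • e k = ∑ k, star (c k) * c k := by
  simp only [star_sum, star_smul, sum_dotProduct, dotProduct_sum, smul_dotProduct,
    dotProduct_smul, he, smul_eq_mul, mul_ite, mul_one, mul_zero, sum_ite_eq', mem_univ, if_true]
  exact sum_congr rfl fun k _ ↦ mul_comm _ _

lemma ofReal_sum_norm_sq (v : n → ℂ) : ((∑ i, ‖v i‖ ^ 2 : ℝ) : ℂ) = star v ⬝ᵥ v := by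
  push_cast
  exact sum_congr rfl fun i _ ↦ by rw [Pi.star_apply, Complex.star_def, mul_comm, Complex.mul_conj']

variable [DecidableEq n]

lemma pow_mulVec_of_mulVec_eq_smul [CommSemiring R] {B : Matrix n n R} {v : n → R} {c : R}
    (h : B *ᵥ v = c • v) (m : ℕ) : (B ^ m) *ᵥ v = c ^ m • v := by
  induction m with
  | zero => simp
  | succ m ih => rw [pow_succ', ← mulVec_mulVec, ih, mulVec_smul, h, smul_smul, ← pow_succ]

lemma star_mulVec_of_mulVec_eq_smul [CommRing R] [StarRing R] {U : Matrix n n R}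
    (hU : U ∈ unitaryGroup n R) {v : n → R} {c c' : R} (hc : c' * c = 1) (h : U *ᵥ v = c • v) :
    star U *ᵥ v = c' • v := by
  have hv : v = c' • (U *ᵥ v) := by rw [h, smul_smul, hc, one_smul]
  conv_lhs => rw [hv]
  rw [mulVec_smul, mulVec_mulVec, hU.1, one_mulVec]

lemma star_mulVec_dotProduct_mulVec_of_mem_unitaryGroup [CommRing R] [StarRing R]
    {U : Matrix n n R} (hU : U ∈ unitaryGroup n R) (u v : n → R) :
    star (U *ᵥ u) ⬝ᵥ (U *ᵥ v) = star u ⬝ᵥ v := by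
  rw [star_mulVec, ← dotProduct_mulVec, mulVec_mulVec, ← star_eq_conjTranspose, hU.1, one_mulVec]

lemma star_dotProduct_eq_zero_of_mulVec_eq_smul [CommRing R] [StarRing R] [IsDomain R]
    {U : Matrix n n R} (hU : U ∈ unitaryGroup n R) {u v : n → R} {c c' : R}
    (hu : U *ᵥ u = c • u) (hv : U *ᵥ v = c' • v) (hcc' : star c * c' ≠ 1) :
    star u ⬝ᵥ v = 0 := by
  have h := star_mulVec_dotProduct_mulVec_of_mem_unitaryGroup hU u v
  rw [hu, hv, star_smul, smul_dotProduct, dotProduct_smul, smul_smul, smul_eq_mul] at h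
  have : (star c * c' - 1) * (star u ⬝ᵥ v) = 0 := by rw [sub_mul, h]; ring
  exact (mul_eq_zero.mp this).resolve_left (sub_ne_zero.mpr hcc')

end UnitaryMatrix

lemma star_dft_dotProduct_dft_of_orthonormal {p : ℕ} [NeZero p] {n : Type*} [Fintype n]
    {e : ZMod p → n → ℂ} (he : ∀ k l, star (e k) ⬝ᵥ e l = if k = l then 1 else 0) (σ : ZMod p) :
    star (𝓕 e σ) ⬝ᵥ 𝓕 e σ = p := by
  rw [dft_apply, star_sum_smul_dotProduct_sum_smul he]
  simp only [Complex.star_def, ← AddChar.map_neg_eq_conj, ← AddChar.map_add_eq_mul, neg_add_cancel,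
    AddChar.map_zero_eq_one, sum_const, card_univ, ZMod.card, nsmul_eq_mul, mul_one]

section PhaseCommuting

variable {p : ℕ} {n : Type*} [Fintype n] [DecidableEq n] {M A : Matrix n n ℂ} {ψ : n → ℂ}

lemma mulVec_dft_pow_val_mulVec [NeZero p] (hMp : M ^ p = 1) (σ : ZMod p) :
    M *ᵥ 𝓕 (fun j ↦ M ^ j.val *ᵥ ψ) σ = stdAddChar σ • 𝓕 (fun j ↦ M ^ j.val *ᵥ ψ) σ := by
  have hshift (j : ZMod p) : M *ᵥ (M ^ j.val *ᵥ ψ) = M ^ (j + 1).val *ᵥ ψ := by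
    rw [mulVec_mulVec, ← pow_succ', ← pow_val_natCast hMp (j.val + 1), Nat.cast_succ,
      ZMod.natCast_zmod_val]
  calc M *ᵥ 𝓕 (fun j ↦ M ^ j.val *ᵥ ψ) σ = 𝓕 (fun j ↦ M ^ (j + 1).val *ᵥ ψ) σ := by
        simp only [dft_apply, mulVec_sum, mulVec_smul, hshift]
    _ = _ := by rw [dft_comp_add_right (fun j ↦ M ^ j.val *ᵥ ψ), one_mul]

lemma mulVec_pow_val_mulVec_of_mul_eq_smul [NeZero p] {φ a : ZMod p}
    (hcomm : M * A = stdAddChar φ • (A * M)) (heig : A *ᵥ ψ = stdAddChar a • ψ) (j : ZMod p) :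
    A *ᵥ (M ^ j.val *ᵥ ψ) = stdAddChar (a - j * φ) • (M ^ j.val *ᵥ ψ) := by
  have h := congrArg (· *ᵥ ψ) (pow_mul_eq_smul_mul_pow hcomm j.val)
  simp only [← mulVec_mulVec, heig, mulVec_smul, smul_mulVec, ← AddChar.map_nsmul_eq_pow,
    nsmul_eq_mul, ZMod.natCast_zmod_val] at h
  calc A *ᵥ (M ^ j.val *ᵥ ψ)
        = stdAddChar (-(j * φ)) • stdAddChar (j * φ) • A *ᵥ (M ^ j.val *ᵥ ψ) := by
        rw [smul_smul, ← AddChar.map_add_eq_mul, neg_add_cancel, AddChar.map_zero_eq_one, one_smul]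
    _ = stdAddChar (a - j * φ) • (M ^ j.val *ᵥ ψ) := by
        rw [← h, smul_smul, ← AddChar.map_add_eq_mul, neg_add_eq_sub]

lemma star_pow_val_mulVec_dotProduct [Fact p.Prime] {φ a : ZMod p}
    (hM : M ∈ unitaryGroup n ℂ) (hA : A ∈ unitaryGroup n ℂ) (hφ : φ ≠ 0)
    (hcomm : M * A = stdAddChar φ • (A * M)) (hψ : star ψ ⬝ᵥ ψ = 1)
    (heig : A *ᵥ ψ = stdAddChar a • ψ) (k l : ZMod p) :
    star (M ^ k.val *ᵥ ψ) ⬝ᵥ (M ^ l.val *ᵥ ψ) = if k = l then 1 else 0 := by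
  split_ifs with hkl
  · rw [hkl, star_mulVec_dotProduct_mulVec_of_mem_unitaryGroup (pow_mem hM _), hψ]
  refine star_dotProduct_eq_zero_of_mulVec_eq_smul hA
    (mulVec_pow_val_mulVec_of_mul_eq_smul hcomm heig k)
    (mulVec_pow_val_mulVec_of_mul_eq_smul hcomm heig l) ?_
  rw [Complex.star_def, ← AddChar.map_neg_eq_conj, ← AddChar.map_add_eq_mul,
    ← AddChar.map_zero_eq_one (stdAddChar (N := p)), injective_stdAddChar.ne_iff]
  have : (k - l) * φ ≠ 0 := mul_ne_zero (sub_ne_zero.mpr hkl) hφ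
  contrapose! this
  linear_combination this

end PhaseCommuting

section Operators

variable {p d : ℕ} [NeZero p] {M A : Matrix (Fin d) (Fin d) ℂ} {ψ : Fin d → ℂ}

lemma Pproj_mulVec (σ : ZMod p) :
    Pproj p d M σ *ᵥ ψ = (p : ℂ)⁻¹ • 𝓕 (fun j ↦ M ^ j.val *ᵥ ψ) σ := by
  rw [Pproj, smul_mulVec, sum_mulVec, sum_range_eq_sum_zmod_val, dft_apply, one_div]
  simp only [smul_mulVec, omega_pow_val, ZMod.natCast_zmod_val, neg_mul]

lemma Vop_mulVec {a : ZMod p} (hA : A ∈ unitaryGroup (Fin d) ℂ)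
    (heig : A *ᵥ ψ = stdAddChar a • ψ) (σ : ZMod p) :
    Vop p d M A σ a *ᵥ ψ = ((√p : ℝ) : ℂ)⁻¹ • 𝓕 (fun j ↦ M ^ j.val *ᵥ ψ) σ := by
  have hstar : star A *ᵥ ψ = stdAddChar (-a) • ψ := star_mulVec_of_mulVec_eq_smul hA
    (by rw [← AddChar.map_add_eq_mul, neg_add_cancel, AddChar.map_zero_eq_one]) heig
  have hcoeff (j : ZMod p) : stdAddChar a * (stdAddChar (-j * (σ - a)) *
      stdAddChar (-a) ^ (j.val + 1)) = stdAddChar (-(j * σ)) := by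
    rw [← AddChar.map_nsmul_eq_pow, ← AddChar.map_add_eq_mul, ← AddChar.map_add_eq_mul,
      nsmul_eq_mul]
    push_cast [ZMod.natCast_zmod_val]
    ring_nf
  rw [Vop, smul_mulVec, sum_mulVec, sum_range_eq_sum_zmod_val, dft_apply, smul_sum, smul_sum]
  refine sum_congr rfl fun j _ ↦ ?_
  rw [smul_mulVec, ← mulVec_mulVec, pow_mulVec_of_mulVec_eq_smul hstar, mulVec_smul, smul_smul,
    smul_smul, omega_pow_val, omega_pow_val, ZMod.natCast_zmod_val, div_eq_inv_mul, mul_assoc,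
    mul_assoc, hcoeff, smul_smul]

end Operators

theorem stmt6_general (p d : ℕ) [Fact p.Prime]
    (M A : Matrix (Fin d) (Fin d) ℂ)
    (hM : M ∈ Matrix.unitaryGroup (Fin d) ℂ)
    (hA : A ∈ Matrix.unitaryGroup (Fin d) ℂ)
    (hMp : M ^ p = 1)
    (φ : ZMod p) (hφ : φ ≠ 0)
    (hcomm : M * A = omega p ^ φ.val • (A * M))
    (σ a : ZMod p)
    (ψ : Fin d → ℂ) (hunit : ∑ i, ‖ψ i‖ ^ 2 = 1)
    (heig : A.mulVec ψ = omega p ^ a.val • ψ) :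
    (Vop p d M A σ a).mulVec ψ = (Real.sqrt p : ℂ) • (Pproj p d M σ).mulVec ψ ∧
    M.mulVec ((Vop p d M A σ a).mulVec ψ) =
      omega p ^ σ.val • (Vop p d M A σ a).mulVec ψ ∧
    ∑ i, ‖(Vop p d M A σ a).mulVec ψ i‖ ^ 2 = 1 := by
  rw [omega_pow_val] at hcomm heig ⊢
  have hψ : star ψ ⬝ᵥ ψ = 1 := by rw [← ofReal_sum_norm_sq, hunit, Complex.ofReal_one]
  have hsqrt : ((√p : ℝ) : ℂ) ^ 2 = p := by
    rw [← Complex.ofReal_pow, Real.sq_sqrt (Nat.cast_nonneg p), Complex.ofReal_natCast]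
  have hsqrt₀ : ((√p : ℝ) : ℂ) ≠ 0 := by
    rw [Complex.ofReal_ne_zero, Real.sqrt_ne_zero']; exact_mod_cast NeZero.pos p
  set X := 𝓕 (fun j ↦ M ^ j.val *ᵥ ψ) σ
  have hX : star X ⬝ᵥ X = p := star_dft_dotProduct_dft_of_orthonormal
    (star_pow_val_mulVec_dotProduct hM hA hφ hcomm hψ heig) σ
  rw [Vop_mulVec hA heig, Pproj_mulVec]
  refine ⟨?_, ?_, ?_⟩
  · rw [smul_smul, ← hsqrt]
    field_simp
  · rw [mulVec_smul, mulVec_dft_pow_val_mulVec hMp, smul_comm]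
  · apply Complex.ofReal_injective
    rw [ofReal_sum_norm_sq, star_smul, smul_dotProduct, dotProduct_smul, hX, smul_eq_mul,
      smul_eq_mul, star_inv₀, Complex.star_def, Complex.conj_ofReal, ← hsqrt, Complex.ofReal_one]
    field_simp

/-- if `A|ψ⟩ = ω^a|ψ⟩` then `V|ψ⟩ = √p · P_{(M,σ)}|ψ⟩`; in particular
`V|ψ⟩` is a unit eigenvector of `M` with eigenvalue `ω^σ`. -/
theorem stmt6 (p d : ℕ) [Fact p.Prime] (hodd : Odd p)
    (M A : Matrix (Fin d) (Fin d) ℂ)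
    (hM : M ∈ Matrix.unitaryGroup (Fin d) ℂ)
    (hA : A ∈ Matrix.unitaryGroup (Fin d) ℂ)
    (hMp : M ^ p = 1) (hAp : A ^ p = 1)
    (φ : ZMod p) (hφ : φ ≠ 0)
    (hcomm : M * A = omega p ^ φ.val • (A * M))
    (σ a : ZMod p)
    (ψ : Fin d → ℂ) (hunit : ∑ i, ‖ψ i‖ ^ 2 = 1)
    (heig : A.mulVec ψ = omega p ^ a.val • ψ) :
    (Vop p d M A σ a).mulVec ψ = (Real.sqrt p : ℂ) • (Pproj p d M σ).mulVec ψ ∧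
    M.mulVec ((Vop p d M A σ a).mulVec ψ) =
      omega p ^ σ.val • (Vop p d M A σ a).mulVec ψ ∧
    ∑ i, ‖(Vop p d M A σ a).mulVec ψ i‖ ^ 2 = 1 :=
  stmt6_general p d M A hM hA hMp φ hφ hcomm σ a ψ hunit heig
end

section
/- Let p be an odd prime and let D(ρ) = p^{−n} Σ_P |tr(Pρ)| be the stabilizer norm of an n-qudit pure state ρ = |ψ⟩⟨ψ| (sum over phase-free Paulis), and let R(ρ) = min{ Σ_j |c_j| : ρ = Σ_j c_j σ_j, σ_j stabilizer states, c_j ∈ R } be the robustness of magic. Then D(ρ) ≤ R(ρ). Consequently M_{(1/2,p)}(|ψ⟩) ≤ 2 log_p R(|ψ⟩⟨ψ|), i.e., R(|ψ⟩⟨ψ|)² ≥ p^{M_{(1/2,p)}(|ψ⟩)}. -/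
open Matrix

/-- The `n`-qudit Pauli operator `X(x)Z(z)`, acting as
`X(x)Z(z)|j⟩ = ω^{z·j} |j + x⟩`. -/
noncomputable def XZ (p n : ℕ) (x z : Fin n → ZMod p) :
    Matrix (Fin n → ZMod p) (Fin n → ZMod p) ℂ :=
  fun i j => if i = x + j then omega p ^ (∑ k, z k * j k : ZMod p).val else 0

/-- `Ξ_P(|ψ⟩) = p^{−n} |⟨ψ|P|ψ⟩|²` for the phase-free Pauli `P = X(x)Z(z)`. -/
noncomputable def Xi (p n : ℕ) [NeZero p] (ψ : (Fin n → ZMod p) → ℂ)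
    (x z : Fin n → ZMod p) : ℝ :=
  (1 / (p : ℝ) ^ n) * ‖star ψ ⬝ᵥ (XZ p n x z).mulVec ψ‖ ^ 2

/-- The stabilizer α-Rényi entropy
`M_{(α,p)}(|ψ⟩) = (1/(1−α)) log_p Σ_P Ξ_P^α(|ψ⟩) − n`. -/
noncomputable def Mren (p : ℕ) [NeZero p] (α : ℝ) (n : ℕ)
    (ψ : (Fin n → ZMod p) → ℂ) : ℝ :=
  (1 / (1 - α)) *
      Real.logb p (∑ x : Fin n → ZMod p, ∑ z : Fin n → ZMod p, Xi p n ψ x z ^ α) - n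

/-- The stabilizer norm `D(ρ) = p^{−n} Σ_P |tr(Pρ)|`, sum over phase-free Paulis. -/
noncomputable def stNorm (p n : ℕ) [NeZero p]
    (ρ : Matrix (Fin n → ZMod p) (Fin n → ZMod p) ℂ) : ℝ :=
  (1 / (p : ℝ) ^ n) *
    ∑ x : Fin n → ZMod p, ∑ z : Fin n → ZMod p, ‖(XZ p n x z * ρ).trace‖

/-- A pure stabilizer density matrix: `σ = |φ⟩⟨φ|` for a unit vector `|φ⟩`
stabilized (up to phase) by exactly `p^n` phase-free Pauli operators. -/
def IsStabDM (p n : ℕ) [NeZero p]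
    (σ : Matrix (Fin n → ZMod p) (Fin n → ZMod p) ℂ) : Prop :=
  ∃ φ : (Fin n → ZMod p) → ℂ, (∑ i, ‖φ i‖ ^ 2 = 1) ∧
    Nat.card {xz : (Fin n → ZMod p) × (Fin n → ZMod p) //
        ‖star φ ⬝ᵥ (XZ p n xz.1 xz.2).mulVec φ‖ = 1} = p ^ n ∧
    σ = Matrix.vecMulVec φ (star φ)

/-! For every Pauli `P`, `tr(Pρ)` is linear in `ρ`, so the triangle inequality gives
`D(Σ cᵢσᵢ) ≤ Σ |cᵢ| D(σᵢ)`. For a unit vector `φ`, Parseval's identity for the characters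
`z ↦ ω^{z·j}` yields `Σ_P |⟨φ|P|φ⟩|² = pⁿ`; for a stabilizer state exactly `pⁿ` of these moduli
equal `1`, so all the others vanish and `D(σ) = 1`. Finally `Ξ_P^{1/2} = p^{-n/2} |⟨ψ|P|ψ⟩|`
turns `M_{(1/2,p)}(ψ)` into `2 log_p D(ρ)`, and the last two claims follow from `D(ρ) ≤ R`
by monotonicity of `log_p` and of squaring. -/

section Characters

variable {p : ℕ} [NeZero p] {ι : Type*} [Fintype ι] [DecidableEq ι]

lemma omega_pow_val_s18 (a : ZMod p) : omega p ^ a.val = ZMod.stdAddChar a := by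
  rw [ZMod.stdAddChar_apply, ZMod.toCircle_apply, omega, ← Complex.exp_nat_mul]
  ring_nf

lemma sum_stdAddChar_dotProduct (a : ι → ZMod p) :
    ∑ z : ι → ZMod p, ZMod.stdAddChar (z ⬝ᵥ a) =
      if a = 0 then (p : ℂ) ^ Fintype.card ι else 0 := by
  classical
  let ψ : AddChar (ι → ZMod p) ℂ := (ZMod.stdAddChar (N := p)).compAddMonoidHom
    (AddMonoidHom.mk' (· ⬝ᵥ a) fun x y => add_dotProduct x y a)
  have hψ : ψ = 0 ↔ a = 0 := by
    refine ⟨fun h => funext fun k => ?_, fun h => ?_⟩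
    · have hk := DFunLike.congr_fun h (Pi.single k 1)
      simp only [ψ, AddChar.compAddMonoidHom_apply, AddMonoidHom.mk'_apply,
        single_dotProduct, one_mul, AddChar.zero_apply] at hk
      rwa [← (ZMod.stdAddChar (N := p)).map_zero_eq_one, ZMod.injective_stdAddChar.eq_iff] at hk
    · ext z
      simp [ψ, h]
  have := ψ.sum_eq_ite
  simp only [hψ, Fintype.card_fun, ZMod.card, Nat.cast_pow] at this
  exact this

lemma sum_norm_sq_sum_mul_stdAddChar (f : (ι → ZMod p) → ℂ) :
    ∑ z : ι → ZMod p, ‖∑ j, f j * ZMod.stdAddChar (z ⬝ᵥ j)‖ ^ 2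
      = p ^ Fintype.card ι * ∑ j, ‖f j‖ ^ 2 := by
  apply Complex.ofReal_injective
  push_cast
  simp only [← Complex.mul_conj', map_sum, map_mul, ← AddChar.map_neg_eq_conj, Finset.sum_mul_sum]
  have hterm : ∀ z i j, f i * ZMod.stdAddChar (z ⬝ᵥ i) *
      ((starRingEnd ℂ) (f j) * ZMod.stdAddChar (-(z ⬝ᵥ j))) =
      f i * (starRingEnd ℂ) (f j) * ZMod.stdAddChar (z ⬝ᵥ (i - j)) := by
    intro z i j
    rw [dotProduct_sub, sub_eq_add_neg, AddChar.map_add_eq_mul]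
    ring
  simp only [hterm]
  calc ∑ z, ∑ i, ∑ j, f i * (starRingEnd ℂ) (f j) * ZMod.stdAddChar (z ⬝ᵥ (i - j))
      = ∑ i, ∑ j, f i * (starRingEnd ℂ) (f j) * ∑ z, ZMod.stdAddChar (z ⬝ᵥ (i - j)) := by
        rw [Finset.sum_comm]
        refine Finset.sum_congr rfl fun i _ => ?_
        rw [Finset.sum_comm]
        simp only [Finset.mul_sum]
    _ = _ := by
        simp only [sum_stdAddChar_dotProduct, sub_eq_zero, mul_ite, mul_zero,
          Finset.sum_ite_eq, Finset.mem_univ, if_true, Finset.mul_sum]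
        exact Finset.sum_congr rfl fun _ _ => mul_comm _ _

end Characters

lemma Matrix.trace_mul_vecMulVec {m R : Type*} [Fintype m] [CommSemiring R]
    (A : Matrix m m R) (u v : m → R) : (A * vecMulVec u v).trace = v ⬝ᵥ A *ᵥ u := by
  rw [mul_vecMulVec, trace_vecMulVec, dotProduct_comm]

lemma XZ_zero_zero {p n : ℕ} : XZ p n 0 0 = 1 := by
  ext i j
  simp [XZ, Matrix.one_apply]

section Pauli

variable {p n : ℕ} [NeZero p]

lemma dotProduct_XZ_mulVec (x z : Fin n → ZMod p) (φ : (Fin n → ZMod p) → ℂ) :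
    star φ ⬝ᵥ XZ p n x z *ᵥ φ = ∑ j, star (φ (x + j)) * φ j * ZMod.stdAddChar (z ⬝ᵥ j) := by
  simp only [dotProduct, mulVec, XZ, ite_mul, zero_mul, Finset.mul_sum, mul_ite, mul_zero]
  rw [Finset.sum_comm]
  refine Finset.sum_congr rfl fun j _ => ?_
  rw [Finset.sum_ite_eq', if_pos (Finset.mem_univ _), Pi.star_apply, ← dotProduct,
    omega_pow_val_s18]
  ring

lemma sum_sum_norm_sq_dotProduct_XZ_mulVec (φ : (Fin n → ZMod p) → ℂ) :
    ∑ x, ∑ z, ‖star φ ⬝ᵥ XZ p n x z *ᵥ φ‖ ^ 2 = p ^ n * (∑ i, ‖φ i‖ ^ 2) ^ 2 := by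
  simp only [dotProduct_XZ_mulVec, sum_norm_sq_sum_mul_stdAddChar, Fintype.card_fin,
    norm_mul, norm_star, mul_pow, ← Finset.mul_sum]
  rw [Finset.sum_comm, sq, Finset.sum_mul_sum]
  congr 1
  conv_rhs => rw [Finset.sum_comm]
  exact Finset.sum_congr rfl fun y _ =>
    Equiv.sum_comp (Equiv.addRight y) fun i => ‖φ i‖ ^ 2 * ‖φ y‖ ^ 2

end Pauli

open Finset in
lemma sum_eq_card_filter_eq_one_of_sum_sq {α : Type*} [Fintype α] (f : α → ℝ)
    (h : ∑ a, f a ^ 2 = #{a | f a = 1}) : ∑ a, f a = #{a | f a = 1} := by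
  have hsq_ones : ∑ a with f a = 1, f a ^ 2 = #{a | f a = 1} := by
    rw [sum_congr rfl fun a ha => by rw [(mem_filter.1 ha).2, one_pow], sum_const, nsmul_one]
  have hrest : ∑ a with ¬f a = 1, f a ^ 2 = 0 := by
    have := sum_filter_add_sum_filter_not univ (fun a => f a = 1) (f · ^ 2)
    linarith
  have hzero : ∀ a, ¬f a = 1 → f a = 0 := fun a ha =>
    pow_eq_zero_iff two_ne_zero |>.1 <|
      (sum_eq_zero_iff_of_nonneg fun _ _ => sq_nonneg _).1 hrest a (by simpa using ha)
  rw [← h]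
  refine sum_congr rfl fun a _ => ?_
  by_cases ha : f a = 1
  · rw [ha, one_pow]
  · rw [hzero a ha, zero_pow two_ne_zero]

section StabilizerNorm

variable {p n : ℕ} [NeZero p]

lemma stNorm_sum_smul_le {ι : Type*} [Fintype ι] (c : ι → ℂ)
    (σ : ι → Matrix (Fin n → ZMod p) (Fin n → ZMod p) ℂ) :
    stNorm p n (∑ i, c i • σ i) ≤ ∑ i, ‖c i‖ * stNorm p n (σ i) := by
  have htrace : ∀ x z, ‖(XZ p n x z * ∑ i, c i • σ i).trace‖ ≤
      ∑ i, ‖c i‖ * ‖(XZ p n x z * σ i).trace‖ := fun x z => by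
    rw [Finset.mul_sum, trace_sum]
    refine (norm_sum_le _ _).trans_eq ?_
    simp only [Matrix.mul_smul, trace_smul, smul_eq_mul, norm_mul]
  calc stNorm p n (∑ i, c i • σ i)
      ≤ 1 / (p : ℝ) ^ n * ∑ x, ∑ z, ∑ i, ‖c i‖ * ‖(XZ p n x z * σ i).trace‖ := by
        unfold stNorm
        gcongr with x _ z _
        exact htrace x z
    _ = ∑ i, ‖c i‖ * stNorm p n (σ i) := by
        simp only [stNorm, Finset.mul_sum, mul_left_comm (1 / (p : ℝ) ^ n)]
        rw [Finset.sum_congr rfl fun x _ => Finset.sum_comm, Finset.sum_comm]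

open Finset in
lemma stNorm_eq_one_of_isStabDM {σ : Matrix (Fin n → ZMod p) (Fin n → ZMod p) ℂ}
    (hσ : IsStabDM p n σ) : stNorm p n σ = 1 := by
  obtain ⟨φ, hφ, hcard, rfl⟩ := hσ
  let f (q : (Fin n → ZMod p) × (Fin n → ZMod p)) : ℝ := ‖star φ ⬝ᵥ XZ p n q.1 q.2 *ᵥ φ‖
  have hcard' : (#{q | f q = 1} : ℝ) = p ^ n := by
    rw [← Fintype.card_subtype, ← Nat.card_eq_fintype_card, hcard, Nat.cast_pow]
  have key := sum_eq_card_filter_eq_one_of_sum_sq f (by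
    rw [hcard', Fintype.sum_prod_type, sum_sum_norm_sq_dotProduct_XZ_mulVec, hφ]
    ring)
  rw [hcard', Fintype.sum_prod_type] at key
  simp only [stNorm, trace_mul_vecMulVec]
  rw [key, one_div_mul_cancel (pow_ne_zero n (Nat.cast_ne_zero.2 (NeZero.ne p)))]

open scoped ComplexOrder in
lemma stNorm_vecMulVec_pos {φ : (Fin n → ZMod p) → ℂ} (hφ : φ ≠ 0) :
    0 < stNorm p n (vecMulVec φ (star φ)) := by
  have hnorm : 0 < ‖star φ ⬝ᵥ XZ p n 0 0 *ᵥ φ‖ := by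
    rwa [XZ_zero_zero, one_mulVec, norm_pos_iff, Ne, dotProduct_star_self_eq_zero]
  have hp : (0 : ℝ) < p := by exact_mod_cast NeZero.pos p
  unfold stNorm
  simp only [trace_mul_vecMulVec]
  refine mul_pos (by positivity) ?_
  refine Finset.sum_pos' (fun _ _ => Finset.sum_nonneg fun _ _ => norm_nonneg _)
    ⟨0, Finset.mem_univ _, ?_⟩
  exact Finset.sum_pos' (fun _ _ => norm_nonneg _) ⟨0, Finset.mem_univ _, hnorm⟩

end StabilizerNorm

lemma Mren_half_eq_two_mul_logb_stNorm {p n : ℕ} [NeZero p] (hp : 1 < p)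
    {ψ : (Fin n → ZMod p) → ℂ} (hψ : ψ ≠ 0) :
    Mren p (1 / 2) n ψ = 2 * Real.logb p (stNorm p n (vecMulVec ψ (star ψ))) := by
  have hp0 : (0 : ℝ) < p := by exact_mod_cast NeZero.pos p
  have hT := stNorm_vecMulVec_pos (n := n) hψ
  simp only [stNorm, trace_mul_vecMulVec] at hT ⊢
  set T := ∑ x, ∑ z, ‖star ψ ⬝ᵥ XZ p n x z *ᵥ ψ‖
  have hT0 : 0 < T := pos_of_mul_pos_right hT (by positivity)
  have hsum : ∑ x, ∑ z, Xi p n ψ x z ^ (1 / 2 : ℝ) = √(1 / (p : ℝ) ^ n) * T := by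
    simp only [Xi, ← Real.sqrt_eq_rpow, Real.sqrt_mul (by positivity : (0 : ℝ) ≤ 1 / p ^ n),
      Real.sqrt_sq (norm_nonneg _), T, Finset.mul_sum]
  have hlog : Real.logb p (1 / (p : ℝ) ^ n) = -n := by
    rw [one_div, Real.logb_inv, Real.logb_pow, Real.logb_self_eq_one (by exact_mod_cast hp),
      mul_one]
  rw [Mren, hsum, Real.logb_mul (by positivity) hT0.ne', Real.sqrt_eq_rpow,
    Real.logb_rpow_eq_mul_logb_of_pos (by positivity), Real.logb_mul (by positivity) hT0.ne', hlog]
  ring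

theorem stmt18_general (p n : ℕ) [Fact p.Prime]
    (ψ : (Fin n → ZMod p) → ℂ) (hunit : ∑ i, ‖ψ i‖ ^ 2 = 1)
    (ι : Type) [Fintype ι] (c : ι → ℝ)
    (σs : ι → Matrix (Fin n → ZMod p) (Fin n → ZMod p) ℂ)
    (hσ : ∀ i, IsStabDM p n (σs i))
    (hdecomp : Matrix.vecMulVec ψ (star ψ) = ∑ i, (c i : ℂ) • σs i) :
    stNorm p n (Matrix.vecMulVec ψ (star ψ)) ≤ ∑ i, |c i| ∧
    Mren p (1 / 2) n ψ ≤ 2 * Real.logb p (∑ i, |c i|) ∧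
    (p : ℝ) ^ (Mren p (1 / 2) n ψ) ≤ (∑ i, |c i|) ^ 2 := by
  have hp : (1 : ℝ) < p := by exact_mod_cast (Fact.out : p.Prime).one_lt
  have hψ : ψ ≠ 0 := by
    rintro rfl
    simp at hunit
  have hD := stNorm_vecMulVec_pos (n := n) hψ
  have hDR : stNorm p n (vecMulVec ψ (star ψ)) ≤ ∑ i, |c i| := by
    calc stNorm p n (vecMulVec ψ (star ψ))
        ≤ ∑ i, ‖(c i : ℂ)‖ * stNorm p n (σs i) := hdecomp ▸ stNorm_sum_smul_le _ σs
      _ = ∑ i, |c i| := by simp [stNorm_eq_one_of_isStabDM (hσ _)]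
  have hM := Mren_half_eq_two_mul_logb_stNorm (Fact.out : p.Prime).one_lt hψ
  refine ⟨hDR, ?_, ?_⟩
  · rw [hM]
    gcongr
  · rw [hM, mul_comm, Real.rpow_mul (by positivity), Real.rpow_logb (by positivity) hp.ne' hD,
      Real.rpow_two]
    gcongr

/-- the stabilizer norm lower-bounds the ℓ1-norm of any real
decomposition of a pure state into stabilizer states (hence `D(ρ) ≤ R(ρ)`);
consequently `M_{(1/2,p)}(|ψ⟩) ≤ 2 log_p R` and `R² ≥ p^{M_{(1/2,p)}(|ψ⟩)}`. -/
theorem stmt18 (p n : ℕ) [Fact p.Prime] (hodd : Odd p)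
    (ψ : (Fin n → ZMod p) → ℂ) (hunit : ∑ i, ‖ψ i‖ ^ 2 = 1)
    (ι : Type) [Fintype ι] (c : ι → ℝ)
    (σs : ι → Matrix (Fin n → ZMod p) (Fin n → ZMod p) ℂ)
    (hσ : ∀ i, IsStabDM p n (σs i))
    (hdecomp : Matrix.vecMulVec ψ (star ψ) = ∑ i, (c i : ℂ) • σs i) :
    stNorm p n (Matrix.vecMulVec ψ (star ψ)) ≤ ∑ i, |c i| ∧
    Mren p (1 / 2) n ψ ≤ 2 * Real.logb p (∑ i, |c i|) ∧
    (p : ℝ) ^ (Mren p (1 / 2) n ψ) ≤ (∑ i, |c i|) ^ 2 :=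
  stmt18_general p n ψ hunit ι c σs hσ hdecomp
end
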